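/- arXiv:2203.03512 — 7 statements merged into one kernel-verified Lean document; each statement's English description precedes it below -/
import Mathlib

section
/- For every real F with 0 < F ≤ 1, the map h(p) = p/2 + (1−p)·(p²·F/4 + (1−p²)·F/3) satisfies h(F/3) ≥ F/3 and h(2F/3) ≤ 2F/3, and consequently (h being continuous) there exists a fixed point p* of h with F/3 ≤ p* ≤ 2F/3. -/
noncomputable def violationUpdate (F p : ℝ) : ℝ :=
  p / 2 + (1 - p) * (p ^ 2 * F / 4 + (1 - p ^ 2) * F / 3)

theorem continuous_violationUpdate (F : ℝ) : Continuous (violationUpdate F) := by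
  unfold violationUpdate
  fun_prop

theorem violationUpdate_third_sub (F : ℝ) :
    violationUpdate F (F / 3) - F / 3 = F * (54 - 36 * F - 3 * F ^ 2 + F ^ 3) / 324 := by
  unfold violationUpdate
  ring

theorem violationUpdate_two_thirds_sub (F : ℝ) :
    violationUpdate F (2 * F / 3) - 2 * F / 3 = -(F ^ 2 * (18 + 3 * F - 2 * F ^ 2)) / 81 := by
  unfold violationUpdate
  ring

theorem le_violationUpdate_third {F : ℝ} (hF0 : 0 ≤ F) (hF1 : F ≤ 1) :
    F / 3 ≤ violationUpdate F (F / 3) := by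
  have hcubic : 0 ≤ 54 - 36 * F - 3 * F ^ 2 + F ^ 3 := by nlinarith [pow_nonneg hF0 3]
  have : 0 ≤ F * (54 - 36 * F - 3 * F ^ 2 + F ^ 3) / 324 := by positivity
  linarith [violationUpdate_third_sub F]

theorem violationUpdate_two_thirds_le {F : ℝ} (hF0 : 0 ≤ F) (hF1 : F ≤ 1) :
    violationUpdate F (2 * F / 3) ≤ 2 * F / 3 := by
  have hquad : 0 ≤ 18 + 3 * F - 2 * F ^ 2 := by nlinarith
  have : 0 ≤ F ^ 2 * (18 + 3 * F - 2 * F ^ 2) / 81 := by positivity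
  linarith [violationUpdate_two_thirds_sub F]

/-- The one-generation update map of the bound-violation probability of DE with
saturation correction, `h(p) = p/2 + (1-p)(p²F/4 + (1-p²)F/3)`, for scale factor
`F ∈ (0,1]`, satisfies `h(F/3) ≥ F/3`, `h(2F/3) ≤ 2F/3`, and has a fixed point
`p*` with `F/3 ≤ p* ≤ 2F/3`. -/
theorem stmt0 (F : ℝ) (hF0 : 0 < F) (hF1 : F ≤ 1) :
    let h : ℝ → ℝ := fun p => p / 2 + (1 - p) * (p ^ 2 * F / 4 + (1 - p ^ 2) * F / 3)
    h (F / 3) ≥ F / 3 ∧ h (2 * F / 3) ≤ 2 * F / 3 ∧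
      ∃ p : ℝ, F / 3 ≤ p ∧ p ≤ 2 * F / 3 ∧ h p = p := by
  have hlow := le_violationUpdate_third hF0.le hF1
  have hhigh := violationUpdate_two_thirds_le hF0.le hF1
  have hle : F / 3 ≤ 2 * F / 3 := by linarith
  obtain ⟨p, ⟨hp₁, hp₂⟩, hfix⟩ :=
    exists_mem_Icc_isFixedPt (continuous_violationUpdate F).continuousOn hle hlow hhigh
  exact ⟨hlow, hhigh, p, hp₁, hp₂, hfix⟩
end

section
/- Let n ≥ 1 and let a, b : Fin n → ℝ with a i < b i for all i, let x, z : Fin n → ℝ. Then ‖c_T(z) − x‖² − ‖c_M(z) − x‖² = Σ_{i : z i < a i ∨ z i > b i} (a i + b i − 2·c_M(z)_i)·(a i + b i − 2·x i). Consequently, if (c_M(z)_i − (a i + b i)/2)·(x i − (a i + b i)/2) ≥ 0 for every index i with z i < a i or z i > b i, then ‖c_M(z) − x‖ ≤ ‖c_T(z) − x‖. -/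
/-! On an infeasible coordinate the two corrections are reflections of each other through the
midpoint `(aᵢ + bᵢ)/2`, so `c_T(z)ᵢ - xᵢ = (aᵢ + bᵢ - c_M(z)ᵢ) - xᵢ` and the difference of squares
factors as `(aᵢ + bᵢ - 2 c_M(z)ᵢ)(aᵢ + bᵢ - 2 xᵢ)`, i.e. four times the product of the offsets of
`c_M(z)ᵢ` and `xᵢ` from the midpoint; on a feasible coordinate the corrections agree. -/

open Finset

noncomputable def mirrorCorrection (a b z : ℝ) : ℝ :=
  if z < a then 2 * a - z else if b < z then 2 * b - z else z

noncomputable def toroidalCorrection (a b z : ℝ) : ℝ :=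
  if z < a then z + (b - a) else if b < z then z - (b - a) else z

lemma mirrorCorrection_add_toroidalCorrection {a b z : ℝ} (h : z < a ∨ b < z) :
    mirrorCorrection a b z + toroidalCorrection a b z = a + b := by
  unfold mirrorCorrection toroidalCorrection
  split_ifs with hza hbz
  · ring
  · ring
  · exact (h.elim hza hbz).elim

lemma toroidalCorrection_eq_mirrorCorrection {a b z : ℝ} (h : ¬(z < a ∨ b < z)) :
    toroidalCorrection a b z = mirrorCorrection a b z := by
  rw [not_or] at h
  simp only [mirrorCorrection, toroidalCorrection, if_neg h.1, if_neg h.2]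

lemma sq_sub_sq_eq_of_add_eq {p q s x : ℝ} (h : q + p = s) :
    (p - x) ^ 2 - (q - x) ^ 2 = (s - 2 * q) * (s - 2 * x) := by
  subst h
  ring

open scoped Classical in
lemma norm_sub_sq_sub_norm_sub_sq_eq_sum_infeasible {ι : Type*} [Fintype ι]
    (a b x z cM cT : EuclideanSpace ℝ ι)
    (hcM : ∀ i, cM i = mirrorCorrection (a i) (b i) (z i))
    (hcT : ∀ i, cT i = toroidalCorrection (a i) (b i) (z i)) :
    ‖cT - x‖ ^ 2 - ‖cM - x‖ ^ 2 =
      ∑ i ∈ univ.filter (fun i => z i < a i ∨ b i < z i),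
        (a i + b i - 2 * cM i) * (a i + b i - 2 * x i) := by
  simp only [EuclideanSpace.real_norm_sq_eq, ← sum_sub_distrib, sum_filter, PiLp.sub_apply]
  refine sum_congr rfl fun i _ => ?_
  split_ifs with h
  · rw [hcM, hcT]
    exact sq_sub_sq_eq_of_add_eq (mirrorCorrection_add_toroidalCorrection h)
  · rw [hcM, hcT, toroidalCorrection_eq_mirrorCorrection h, sub_self]

open scoped Classical in
theorem stmt3_general (n : ℕ) (a b x z cM cT : EuclideanSpace ℝ (Fin n))
    (hcM : ∀ i, cM i =
      if z i < a i then 2 * a i - z i else if b i < z i then 2 * b i - z i else z i)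
    (hcT : ∀ i, cT i =
      if z i < a i then z i + (b i - a i) else if b i < z i then z i - (b i - a i) else z i) :
    ‖cT - x‖ ^ 2 - ‖cM - x‖ ^ 2 =
      ∑ i ∈ Finset.univ.filter (fun i => z i < a i ∨ b i < z i),
        (a i + b i - 2 * cM i) * (a i + b i - 2 * x i) ∧
    ((∀ i, (z i < a i ∨ b i < z i) →
        (cM i - (a i + b i) / 2) * (x i - (a i + b i) / 2) ≥ 0) →
      ‖cM - x‖ ≤ ‖cT - x‖) := by
  have hdiff := norm_sub_sq_sub_norm_sub_sq_eq_sum_infeasible a b x z cM cT hcM hcT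
  refine ⟨hdiff, fun hsame => ?_⟩
  rw [← sq_le_sq₀ (norm_nonneg _) (norm_nonneg _), ← sub_nonneg, hdiff]
  refine sum_nonneg fun i hi => ?_
  have hfactor : (a i + b i - 2 * cM i) * (a i + b i - 2 * x i) =
      4 * ((cM i - (a i + b i) / 2) * (x i - (a i + b i) / 2)) := by ring
  rw [hfactor]
  exact mul_nonneg zero_le_four (hsame i (mem_filter.1 hi).2)

open scoped Classical in
theorem stmt3 (n : ℕ) (hn : 1 ≤ n) (a b x z cM cT : EuclideanSpace ℝ (Fin n))
    (hab : ∀ i, a i < b i)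
    (hcM : ∀ i, cM i =
      if z i < a i then 2 * a i - z i else if b i < z i then 2 * b i - z i else z i)
    (hcT : ∀ i, cT i =
      if z i < a i then z i + (b i - a i) else if b i < z i then z i - (b i - a i) else z i) :
    ‖cT - x‖ ^ 2 - ‖cM - x‖ ^ 2 =
      ∑ i ∈ Finset.univ.filter (fun i => z i < a i ∨ b i < z i),
        (a i + b i - 2 * cM i) * (a i + b i - 2 * x i) ∧
    ((∀ i, (z i < a i ∨ b i < z i) →
        (cM i - (a i + b i) / 2) * (x i - (a i + b i) / 2) ≥ 0) →
      ‖cM - x‖ ≤ ‖cT - x‖) :=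
  stmt3_general n a b x z cM cT hcM hcT
end

section
/- Let n ≥ 1, a, b : Fin n → ℝ with a i < b i, let x be feasible (a i ≤ x i ≤ b i for all i) and let z : Fin n → ℝ have exactly one infeasible component at index k with z k > b k (and a i ≤ z i ≤ b i for all i ≠ k). Let c_S(z) be obtained from z by replacing z k with b k, and let c(z) be obtained from z by replacing z k with some γ satisfying a k < γ < b k. Set d = z − x, d_S = c_S(z) − x, d_C = c(z) − x and assume d_S ≠ 0 and d_C ≠ 0. If ‖d‖² ≥ 2·(z k − x k)·(z k − b k), then ⟨d, d_S⟩/(‖d‖·‖d_S‖) ≥ ⟨d, d_C⟩/(‖d‖·‖d_C‖). -/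
/-!
Write `d = z - x = w + u eₖ` with `w ⟂ eₖ`; then `d_S = w + s eₖ` and `d_C = w + t eₖ`
with `t < s < u`, where `s = b k - x k` and `t = γ - x k`. With `A = ‖w‖²`, the cosine between `d`
and `w + r eₖ` is `(A + u r) / (‖d‖ √(A + r²))`, whose derivative in `r` has the sign of
`A (u - r)`. So the cosine increases on `r ≤ u`: moving the `k`-th coordinate towards the
uncorrected value only improves the direction, and `b k` is the admissible value closest to `z k`.
-/

open scoped RealInnerProductSpace

open Set

section RealInequalities

lemma mul_le_mul_sqrt_of_sq_mul_le {X Y P Q : ℝ} (hY : 0 ≤ Y) (h : X ^ 2 * P ≤ Y ^ 2 * Q) :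
    X * √P ≤ Y * √Q :=
  calc X * √P ≤ |X| * √P := mul_le_mul_of_nonneg_right (le_abs_self X) (Real.sqrt_nonneg P)
    _ = √(X ^ 2 * P) := by rw [Real.sqrt_mul (sq_nonneg X), Real.sqrt_sq_eq_abs]
    _ ≤ √(Y ^ 2 * Q) := Real.sqrt_le_sqrt h
    _ = Y * √Q := by rw [Real.sqrt_mul (sq_nonneg Y), Real.sqrt_sq hY]

variable {A u s t : ℝ}

lemma add_mul_mul_sqrt_le (hA : 0 ≤ A) (hu : 0 ≤ u) (hts : t ≤ s) (hsu : s ≤ u) :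
    (A + u * t) * √(A + s ^ 2) ≤ (A + u * s) * √(A + t ^ 2) := by
  /- `(A + u s)² (A + t²) - (A + u t)² (A + s²) = A (s - t) B`, where
  `B = (A + u t)(2u - s - t) + u (u - t)(s - t) = (A + u s)(2u - s - t) - u (u - s)(s - t)`;
  the first form shows `B ≥ 0` when `A + u t > 0`, the second `B ≤ 0` when `A + u s ≤ 0`. -/
  have hst : 0 ≤ A * (s - t) := mul_nonneg hA (by linarith)
  rcases le_or_gt (A + u * t) 0 with ht | ht
  · rcases le_or_gt (A + u * s) 0 with hs | hs
    · have hB : (A + u * s) * (2 * u - s - t) - u * (u - s) * (s - t) ≤ 0 := by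
        nlinarith [mul_nonneg hu (mul_nonneg (sub_nonneg.2 hsu) (sub_nonneg.2 hts))]
      have hsq : (-(A + u * s)) ^ 2 * (A + t ^ 2) ≤ (-(A + u * t)) ^ 2 * (A + s ^ 2) := by
        linear_combination mul_nonpos_of_nonneg_of_nonpos hst hB
      linarith [mul_le_mul_sqrt_of_sq_mul_le (by linarith) hsq]
    · calc (A + u * t) * √(A + s ^ 2) ≤ 0 :=
            mul_nonpos_of_nonpos_of_nonneg ht (Real.sqrt_nonneg _)
        _ ≤ (A + u * s) * √(A + t ^ 2) := mul_nonneg hs.le (Real.sqrt_nonneg _)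
  · have hB : 0 ≤ (A + u * t) * (2 * u - s - t) + u * (u - t) * (s - t) := by
      nlinarith [mul_nonneg hu (mul_nonneg (by linarith : 0 ≤ u - t) (sub_nonneg.2 hts))]
    refine mul_le_mul_sqrt_of_sq_mul_le (by nlinarith) ?_
    linear_combination mul_nonneg hst hB

lemma monotoneOn_add_mul_div_sqrt_add_sq (hA : 0 ≤ A) (hu : 0 ≤ u) :
    MonotoneOn (fun r ↦ (A + u * r) / √(A + r ^ 2)) (Iic u) := by
  intro t _ s (hsu : s ≤ u) hts
  dsimp only
  -- a vanishing denominator forces `A = 0` and `r = 0`, and the junk value `0` still fits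
  rcases (Real.sqrt_nonneg (A + t ^ 2)).eq_or_lt with ht | ht
  · have : t = 0 := by nlinarith [Real.sqrt_eq_zero'.1 ht.symm]
    rw [← ht, div_zero]
    exact div_nonneg (by nlinarith) (Real.sqrt_nonneg _)
  rcases (Real.sqrt_nonneg (A + s ^ 2)).eq_or_lt with hs | hs
  · have : A = 0 ∧ s = 0 := by
      have := Real.sqrt_eq_zero'.1 hs.symm
      constructor <;> nlinarith
    rw [← hs, div_zero, this.1]
    exact div_nonpos_of_nonpos_of_nonneg (by nlinarith) (Real.sqrt_nonneg _)
  rw [div_le_div_iff₀ ht hs]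
  exact add_mul_mul_sqrt_le hA hu hts hsu

end RealInequalities

section EuclideanSpace

variable {ι : Type*} [Fintype ι] [DecidableEq ι] {w : EuclideanSpace ℝ ι} {k : ι}

lemma inner_add_single_add_single (hw : w k = 0) (p q : ℝ) :
    ⟪w + EuclideanSpace.single k p, w + EuclideanSpace.single k q⟫ = ‖w‖ ^ 2 + p * q := by
  simp [inner_add_left, inner_add_right, EuclideanSpace.inner_single_left,
    EuclideanSpace.inner_single_right, hw]
  ring

lemma norm_add_single (hw : w k = 0) (r : ℝ) :
    ‖w + EuclideanSpace.single k r‖ = √(‖w‖ ^ 2 + r ^ 2) := by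
  rw [norm_eq_sqrt_real_inner, inner_add_single_add_single hw, sq r]

lemma monotoneOn_inner_div_norm_mul_norm_add_single (hw : w k = 0) {u : ℝ} (hu : 0 ≤ u) :
    MonotoneOn (fun r ↦ ⟪w + EuclideanSpace.single k u, w + EuclideanSpace.single k r⟫ /
      (‖w + EuclideanSpace.single k u‖ * ‖w + EuclideanSpace.single k r‖)) (Iic u) := by
  intro t ht s hs hts
  simp only [inner_add_single_add_single hw, norm_add_single hw _, div_mul_eq_div_div_swap]
  exact div_le_div_of_nonneg_right
    (monotoneOn_add_mul_div_sqrt_add_sq (sq_nonneg ‖w‖) hu ht hs hts) (Real.sqrt_nonneg _)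

end EuclideanSpace

theorem stmt4_general (n : ℕ) (k : Fin n) (a b x z cS c : EuclideanSpace ℝ (Fin n))
    (γ : ℝ)
    (hx : ∀ i, a i ≤ x i ∧ x i ≤ b i)
    (hzk : b k < z k)
    (hγ : a k < γ ∧ γ < b k)
    (hcS : ∀ i, i ≠ k → cS i = z i) (hcSk : cS k = b k)
    (hc : ∀ i, i ≠ k → c i = z i) (hck : c k = γ) :
    ⟪z - x, cS - x⟫ / (‖z - x‖ * ‖cS - x‖) ≥ ⟪z - x, c - x⟫ / (‖z - x‖ * ‖c - x‖) := by
  set w := z - x - EuclideanSpace.single k (z k - x k)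
  have hw : w k = 0 := by simp [w]
  have hsub : ∀ v : EuclideanSpace ℝ (Fin n), (∀ i, i ≠ k → v i = z i) →
      v - x = w + EuclideanSpace.single k (v k - x k) := by
    intro v hv
    ext i
    by_cases hi : i = k
    · subst hi; simp [w]
    · simp [w, hi, hv i hi]
  rw [hsub z fun _ _ ↦ rfl, hsub cS hcS, hsub c hc, hcSk, hck]
  have hxk := (hx k).2
  exact monotoneOn_inner_div_norm_mul_norm_add_single hw (by linarith)
    (by simp only [mem_Iic]; linarith) (by simp only [mem_Iic]; linarith) (by linarith [hγ.2])

/-- Proposition 3: when the trial `z` has exactly one infeasible component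
`z k > b k`, the saturation correction `c_S(z)` (replacing `z k` by `b k`)
preserves the search direction at least as well as any other strategy `c(z)`
replacing `z k` by an interior value `γ ∈ (a k, b k)`, provided
`‖d‖² ≥ 2(z k - x k)(z k - b k)` where `d = z - x`. -/
theorem stmt4 (n : ℕ) (hn : 1 ≤ n) (k : Fin n) (a b x z cS c : EuclideanSpace ℝ (Fin n))
    (γ : ℝ)
    (hab : ∀ i, a i < b i)
    (hx : ∀ i, a i ≤ x i ∧ x i ≤ b i)
    (hzk : b k < z k)
    (hzi : ∀ i, i ≠ k → a i ≤ z i ∧ z i ≤ b i)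
    (hγ : a k < γ ∧ γ < b k)
    (hcS : ∀ i, i ≠ k → cS i = z i) (hcSk : cS k = b k)
    (hc : ∀ i, i ≠ k → c i = z i) (hck : c k = γ)
    (hdS : cS - x ≠ 0) (hdC : c - x ≠ 0)
    (hnorm : ‖z - x‖ ^ 2 ≥ 2 * (z k - x k) * (z k - b k)) :
    ⟪z - x, cS - x⟫ / (‖z - x‖ * ‖cS - x‖) ≥ ⟪z - x, c - x⟫ / (‖z - x‖ * ‖c - x‖) :=
  stmt4_general n k a b x z cS c γ hx hzk hγ hcS hcSk hc hck
end

section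
/- Let D, δ, δ_S, δ_C be real numbers with δ > 0, 0 ≤ δ_C ≤ δ_S < δ, D ≥ δ², D ≥ 2·δ·(δ − δ_S), and D + δ_C² − δ² > 0. Then C(D, δ_S, δ) ≥ C(D, δ_C, δ), where C(D, δ_c, δ) = (D + δ·(δ_c − δ))²/(D + δ_c² − δ²). -/
/-! Substituting `A = D - δ²` turns `C(D, c, δ)` into `f c = (A + δ c)² / (A + c²)`, and
`f' c = 2 A (A + δ c) (δ - c) / (A + c²)²`, which is nonnegative for `0 ≤ c ≤ δ` as soon as
`A ≥ 0`; correspondingly, `f c ≤ f s` cross-multiplied is a product of nonnegative factors. -/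

theorem add_mul_sq_mul_add_sq_sub (A δ c s : ℝ) :
    (A + δ * s) ^ 2 * (A + c ^ 2) - (A + δ * c) ^ 2 * (A + s ^ 2) =
      A * (s - c) * (A * ((δ - s) + (δ - c)) + δ * (s * (δ - c) + c * (δ - s))) := by
  ring

theorem add_mul_sq_div_add_sq_le {A δ c s : ℝ} (hA : 0 ≤ A) (hc : 0 ≤ c) (hcs : c ≤ s)
    (hsδ : s ≤ δ) (hpos : 0 < A + c ^ 2) :
    (A + δ * c) ^ 2 / (A + c ^ 2) ≤ (A + δ * s) ^ 2 / (A + s ^ 2) := by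
  have hs : 0 ≤ s := hc.trans hcs
  have hδ : 0 ≤ δ := hs.trans hsδ
  have hcross : 0 ≤ A * (s - c) * (A * ((δ - s) + (δ - c)) + δ * (s * (δ - c) + c * (δ - s))) := by
    have hδc : 0 ≤ δ - c := by linarith
    have hδs : 0 ≤ δ - s := by linarith
    have hcs' : 0 ≤ s - c := by linarith
    positivity
  rw [div_le_div_iff₀ hpos (by nlinarith)]
  linarith [add_mul_sq_mul_add_sq_sub A δ c s]

theorem stmt5_general (D δ δS δC : ℝ)
    (hδC0 : 0 ≤ δC) (hδCS : δC ≤ δS) (hδS : δS < δ)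
    (hD1 : D ≥ δ ^ 2) (hD3 : D + δC ^ 2 - δ ^ 2 > 0) :
    (D + δ * (δS - δ)) ^ 2 / (D + δS ^ 2 - δ ^ 2) ≥
      (D + δ * (δC - δ)) ^ 2 / (D + δC ^ 2 - δ ^ 2) := by
  have hA : 0 ≤ D - δ ^ 2 := sub_nonneg.mpr hD1
  have key := add_mul_sq_div_add_sq_le hA hδC0 hδCS hδS.le (by linarith)
  have shift : ∀ c, D + δ * (c - δ) = D - δ ^ 2 + δ * c := fun c => by ring
  have shift' : ∀ c, D + c ^ 2 - δ ^ 2 = D - δ ^ 2 + c ^ 2 := fun c => by ring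
  rw [ge_iff_le, shift, shift, shift', shift']
  exact key

/-- The auxiliary inequality from the proof of Proposition 3: with
`C(D, δ_c, δ) = (D + δ(δ_c - δ))² / (D + δ_c² - δ²)`, under the conditions
`δ > 0`, `0 ≤ δ_C ≤ δ_S < δ`, `D ≥ δ²`, `D ≥ 2δ(δ - δ_S)` and
`D + δ_C² - δ² > 0`, one has `C(D, δ_S, δ) ≥ C(D, δ_C, δ)`. -/
theorem stmt5 (D δ δS δC : ℝ)
    (hδ : 0 < δ) (hδC0 : 0 ≤ δC) (hδCS : δC ≤ δS) (hδS : δS < δ)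
    (hD1 : D ≥ δ ^ 2) (hD2 : D ≥ 2 * δ * (δ - δS)) (hD3 : D + δC ^ 2 - δ ^ 2 > 0) :
    (D + δ * (δS - δ)) ^ 2 / (D + δS ^ 2 - δ ^ 2) ≥
      (D + δ * (δC - δ)) ^ 2 / (D + δC ^ 2 - δ ^ 2) :=
  stmt5_general D δ δS δC hδC0 hδCS hδS hD1 hD3
end

section
/- Let n ≥ 1, a, b : Fin n → ℝ with a i ≤ b i, let x satisfy a i ≤ x i ≤ b i for all i, and let z : Fin n → ℝ be arbitrary. Let c_S(z)_i = max(a i, min(b i, z i)) be the saturation correction. Then (z i − x i)·(c_S(z)_i − x i) ≥ 0 for every i, and hence ⟨z − x, c_S(z) − x⟩ ≥ 0; in particular, if z − x ≠ 0 and c_S(z) − x ≠ 0, the cosine similarity between the search direction z − x and the corrected search direction c_S(z) − x is nonnegative. -/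
open scoped RealInnerProductSpace

/-! Since `x` lies in the box, clamping `z` to the box never moves a coordinate past `x`:
each coordinate of the corrected direction `c_S(z) - x` has the sign of the corresponding
coordinate of `z - x`, so the inner product is a sum of nonnegative terms. -/

theorem sub_mul_max_min_sub_nonneg {α : Type*} [Ring α] [LinearOrder α] [IsOrderedRing α]
    {a b x : α} (hax : a ≤ x) (hxb : x ≤ b) (z : α) :
    0 ≤ (z - x) * (max a (min b z) - x) := by
  rcases le_total z x with hzx | hxz
  · have hclamp : max a (min b z) ≤ x := max_le hax ((min_le_right _ _).trans hzx)
    exact mul_nonneg_of_nonpos_of_nonpos (sub_nonpos.2 hzx) (sub_nonpos.2 hclamp)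
  · have hclamp : x ≤ max a (min b z) := le_max_of_le_right (le_min hxb hxz)
    exact mul_nonneg (sub_nonneg.2 hxz) (sub_nonneg.2 hclamp)

theorem EuclideanSpace.inner_nonneg_of_forall_mul_nonneg {ι : Type*} [Fintype ι]
    {u v : EuclideanSpace ℝ ι} (h : ∀ i, 0 ≤ u i * v i) : 0 ≤ ⟪u, v⟫ := by
  rw [PiLp.inner_apply]
  exact Finset.sum_nonneg fun i _ => by simpa [mul_comm] using h i

theorem stmt6_general (n : ℕ) (a b x z cS : EuclideanSpace ℝ (Fin n))
    (hx : ∀ i, a i ≤ x i ∧ x i ≤ b i)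
    (hcS : ∀ i, cS i = max (a i) (min (b i) (z i))) :
    (∀ i, 0 ≤ (z i - x i) * (cS i - x i)) ∧
    0 ≤ ⟪z - x, cS - x⟫ ∧
    (z - x ≠ 0 → cS - x ≠ 0 →
      0 ≤ ⟪z - x, cS - x⟫ / (‖z - x‖ * ‖cS - x‖)) := by
  have hcoord : ∀ i, 0 ≤ (z i - x i) * (cS i - x i) := fun i =>
    hcS i ▸ sub_mul_max_min_sub_nonneg (hx i).1 (hx i).2 (z i)
  have hinner : 0 ≤ ⟪z - x, cS - x⟫ :=
    EuclideanSpace.inner_nonneg_of_forall_mul_nonneg (by simpa using hcoord)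
  exact ⟨hcoord, hinner, fun _ _ => div_nonneg hinner (by positivity)⟩

/-- Section 4.3: for the saturation correction `c_S(z)ᵢ = max(aᵢ, min(bᵢ, zᵢ))` and a
feasible target `x`, every componentwise product `(zᵢ - xᵢ)(c_S(z)ᵢ - xᵢ)` is
nonnegative, hence `⟨z - x, c_S(z) - x⟩ ≥ 0`, and in particular the cosine
similarity between the uncorrected and the corrected search directions is
nonnegative. -/
theorem stmt6 (n : ℕ) (hn : 1 ≤ n) (a b x z cS : EuclideanSpace ℝ (Fin n))
    (hab : ∀ i, a i ≤ b i)
    (hx : ∀ i, a i ≤ x i ∧ x i ≤ b i)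
    (hcS : ∀ i, cS i = max (a i) (min (b i) (z i))) :
    (∀ i, 0 ≤ (z i - x i) * (cS i - x i)) ∧
    0 ≤ ⟪z - x, cS - x⟫ ∧
    (z - x ≠ 0 → cS - x ≠ 0 →
      0 ≤ ⟪z - x, cS - x⟫ / (‖z - x‖ * ‖cS - x‖)) :=
  stmt6_general n a b x z cS hx hcS
end

section
/- Let a, b : Fin n → ℝ with a i ≤ b i, let x₁, x₂, x₃ satisfy a i ≤ (x_j) i ≤ b i for all i and j ∈ {1,2,3}, and let F be a real number. If 0 ≤ F ≤ 1, then for every i the mutant component (x₁) i + F·((x₂) i − (x₃) i) lies in [2·a i − b i, 2·b i − a i]; if moreover 0 ≤ F ≤ 1/2, it lies in [a i − (b i − a i)/2, b i + (b i − a i)/2]. -/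
open Set

section MutantBounds

variable {α : Type*} [Ring α] [LinearOrder α] [IsOrderedRing α] {a b x y z F c : α}

lemma abs_mul_sub_le_of_mem_Icc (hy : y ∈ Icc a b) (hz : z ∈ Icc a b) (hF : 0 ≤ F)
    (hFc : F ≤ c) : |F * (y - z)| ≤ c * (b - a) :=
  calc |F * (y - z)| = F * |y - z| := by rw [abs_mul, abs_of_nonneg hF]
    _ ≤ c * (b - a) :=
      mul_le_mul hFc (abs_sub_le_of_le_of_le hy.1 hy.2 hz.1 hz.2) (abs_nonneg _) (hF.trans hFc)

lemma add_mul_sub_mem_Icc (hx : x ∈ Icc a b) (hy : y ∈ Icc a b) (hz : z ∈ Icc a b)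
    (hF : 0 ≤ F) (hFc : F ≤ c) :
    x + F * (y - z) ∈ Icc (a - c * (b - a)) (b + c * (b - a)) := by
  obtain ⟨hlo, hhi⟩ := abs_le.1 (abs_mul_sub_le_of_mem_Icc hy hz hF hFc)
  exact ⟨by rw [sub_eq_add_neg]; exact add_le_add hx.1 hlo, add_le_add hx.2 hhi⟩

end MutantBounds

theorem stmt7_general (n : ℕ) (a b x₁ x₂ x₃ : Fin n → ℝ) (F : ℝ)
    (h1 : ∀ i, a i ≤ x₁ i ∧ x₁ i ≤ b i)
    (h2 : ∀ i, a i ≤ x₂ i ∧ x₂ i ≤ b i)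
    (h3 : ∀ i, a i ≤ x₃ i ∧ x₃ i ≤ b i) :
    (0 ≤ F → F ≤ 1 → ∀ i,
      2 * a i - b i ≤ x₁ i + F * (x₂ i - x₃ i) ∧
      x₁ i + F * (x₂ i - x₃ i) ≤ 2 * b i - a i) ∧
    (0 ≤ F → F ≤ 1 / 2 → ∀ i,
      a i - (b i - a i) / 2 ≤ x₁ i + F * (x₂ i - x₃ i) ∧
      x₁ i + F * (x₂ i - x₃ i) ≤ b i + (b i - a i) / 2) := by
  refine ⟨fun hF hF1 i => ?_, fun hF hF1 i => ?_⟩ <;>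
  · obtain ⟨hlo, hhi⟩ := add_mul_sub_mem_Icc (h1 i) (h2 i) (h3 i) hF hF1
    constructor <;> linarith

/-- Section 4 / Proposition 2: if the population members `x₁, x₂, x₃` lie in the
box `⨯ᵢ [aᵢ, bᵢ]` and `0 ≤ F ≤ 1`, then every component of the DE/rand/1 mutant
`x₁ + F(x₂ - x₃)` lies in the extended domain `[2aᵢ - bᵢ, 2bᵢ - aᵢ]`; if moreover
`0 ≤ F ≤ 1/2`, it lies in `[aᵢ - (bᵢ-aᵢ)/2, bᵢ + (bᵢ-aᵢ)/2]`. -/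
theorem stmt7 (n : ℕ) (a b x₁ x₂ x₃ : Fin n → ℝ) (F : ℝ)
    (hab : ∀ i, a i ≤ b i)
    (h1 : ∀ i, a i ≤ x₁ i ∧ x₁ i ≤ b i)
    (h2 : ∀ i, a i ≤ x₂ i ∧ x₂ i ≤ b i)
    (h3 : ∀ i, a i ≤ x₃ i ∧ x₃ i ≤ b i) :
    (0 ≤ F → F ≤ 1 → ∀ i,
      2 * a i - b i ≤ x₁ i + F * (x₂ i - x₃ i) ∧
      x₁ i + F * (x₂ i - x₃ i) ≤ 2 * b i - a i) ∧
    (0 ≤ F → F ≤ 1 / 2 → ∀ i,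
      a i - (b i - a i) / 2 ≤ x₁ i + F * (x₂ i - x₃ i) ∧
      x₁ i + F * (x₂ i - x₃ i) ≤ b i + (b i - a i) / 2) :=
  stmt7_general n a b x₁ x₂ x₃ F h1 h2 h3
end

section
/- Let 0 < F ≤ 1 and define g : ℝ → ℝ by g(w) = (3/(2F³))·(F − w)²·1_{[0,F]}(w) + (3/(2F³))·(w − (1 − F))²·1_{[1−F,1]}(w). Then ∫_ℝ g(w) dw = 1, ∫_ℝ w·g(w) dw = 1/2, and ∫_ℝ w²·g(w) dw − (1/2)² = F²/10 − F/4 + 1/4. -/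
/-!
Both mirrored tails are copies of one density `ρ(w) = 3(F - w)²/F³` on `[0, F]`, the upper one
reflected by `w ↦ 1 - w`. Hence `g = (ρ + ρ(1 - ·))/2`, and the reflection invariance of Lebesgue
measure gives `∫ h g = ½ ∫ (h(w) + h(1 - w)) ρ(w)`. For quadratic `h` this only involves the
moments `∫ ρ = 1`, `∫ w ρ = F/4`, `∫ w² ρ = F²/10`, so `g` has mean `1/2` and second moment
`F²/10 - F/4 + 1/2`.
-/

open MeasureTheory Set

theorem integral_mul_add_comp_sub_left {G : Type*} [MeasurableSpace G] [AddCommGroup G]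
    [MeasurableAdd G] [MeasurableNeg G] {μ : Measure G} [μ.IsNegInvariant] [μ.IsAddLeftInvariant]
    {h ρ : G → ℝ} (c : G) (hh : Integrable (fun w => h w * ρ w) μ)
    (hh' : Integrable (fun w => h (c - w) * ρ w) μ) :
    ∫ w, h w * (ρ w + ρ (c - w)) ∂μ = ∫ w, (h w + h (c - w)) * ρ w ∂μ := by
  have hreflect : Integrable (fun w => h w * ρ (c - w)) μ := by
    simpa only [sub_sub_cancel] using hh'.comp_sub_left c
  have hreflect_eq : ∫ w, h w * ρ (c - w) ∂μ = ∫ w, h (c - w) * ρ w ∂μ := by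
    simpa only [sub_sub_cancel] using integral_sub_left_eq_self (fun w => h (c - w) * ρ w) μ c
  simp only [mul_add, add_mul]
  rw [integral_add hh hreflect, integral_add hh hh', hreflect_eq]

theorem intervalIntegral_quadratic_mul_sub_sq (a b d F : ℝ) :
    ∫ w in (0 : ℝ)..F, (a + b * w + d * w ^ 2) * (F - w) ^ 2
      = a * F ^ 3 / 3 + b * F ^ 4 / 12 + d * F ^ 5 / 30 := by
  have hexpand : (fun w : ℝ => (a + b * w + d * w ^ 2) * (F - w) ^ 2) = fun w =>
      a * F ^ 2 * w ^ 0 + (b * F ^ 2 - 2 * a * F) * w ^ 1 + (a - 2 * b * F + d * F ^ 2) * w ^ 2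
        + (b - 2 * d * F) * w ^ 3 + d * w ^ 4 := by
    funext w
    ring
  rw [hexpand]
  repeat rw [intervalIntegral.integral_add (Continuous.intervalIntegrable (by fun_prop) _ _)
    (Continuous.intervalIntegrable (by fun_prop) _ _)]
  simp only [intervalIntegral.integral_const_mul, integral_pow]
  ring

/-- The lower-tail density `3(F + z)²/F³` on `[-F, 0]`, mirrored by `z ↦ -z`. -/
noncomputable def mirroredTailDensity (F : ℝ) : ℝ → ℝ :=
  (Icc 0 F).indicator fun w => 3 / F ^ 3 * (F - w) ^ 2

section mirroredTailDensity

variable {F : ℝ}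

theorem integrable_mul_mirroredTailDensity {h : ℝ → ℝ} (hh : Continuous h) :
    Integrable fun w => h w * mirroredTailDensity F w := by
  simp_rw [mirroredTailDensity, ← indicator_mul_right]
  exact (Continuous.integrableOn_Icc (by fun_prop)).integrable_indicator measurableSet_Icc

theorem integral_mul_mirroredTailDensity (hF : 0 ≤ F) (h : ℝ → ℝ) :
    ∫ w, h w * mirroredTailDensity F w = 3 / F ^ 3 * ∫ w in (0 : ℝ)..F, h w * (F - w) ^ 2 := by
  simp_rw [mirroredTailDensity, ← indicator_mul_right, mul_left_comm (h _)]
  rw [integral_indicator measurableSet_Icc, integral_Icc_eq_integral_Ioc,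
    ← intervalIntegral.integral_of_le hF, intervalIntegral.integral_const_mul]

theorem integral_quadratic_mul_mirroredTailDensity (hF : 0 < F) (a b d : ℝ) :
    ∫ w, (a + b * w + d * w ^ 2) * mirroredTailDensity F w = a + b * F / 4 + d * F ^ 2 / 10 := by
  rw [integral_mul_mirroredTailDensity hF.le (fun w => a + b * w + d * w ^ 2),
    intervalIntegral_quadratic_mul_sub_sq]
  field_simp
  ring

/-- The upper-tail density `3(1 + F - z)²/F³` on `[1, 1 + F]`, mirrored by `z ↦ 2 - z`. -/
theorem mirroredTailDensity_one_sub (w : ℝ) :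
    mirroredTailDensity F (1 - w)
      = (Icc (1 - F) 1).indicator (fun w => 3 / F ^ 3 * (w - (1 - F)) ^ 2) w := by
  by_cases hw : w ∈ Icc (1 - F) 1
  · have hw' : 1 - w ∈ Icc 0 F := by
      rw [mem_Icc] at hw ⊢
      constructor <;> linarith
    rw [mirroredTailDensity, indicator_of_mem hw', indicator_of_mem hw]
    ring
  · have hw' : 1 - w ∉ Icc 0 F := by
      rw [mem_Icc] at hw ⊢
      contrapose! hw
      constructor <;> linarith
    rw [mirroredTailDensity, indicator_of_notMem hw', indicator_of_notMem hw]

theorem integral_quadratic_mul_mirrorMixture (hF : 0 < F) (a b d : ℝ) :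
    ∫ w, (a + b * w + d * w ^ 2)
        * ((mirroredTailDensity F w + mirroredTailDensity F (1 - w)) / 2)
      = a + b / 2 + d * (F ^ 2 / 10 - F / 4 + 1 / 2) := by
  calc _ = (∫ w, (a + b * w + d * w ^ 2)
          * (mirroredTailDensity F w + mirroredTailDensity F (1 - w))) / 2 := by
        rw [← integral_div]
        simp_rw [mul_div_assoc]
    _ = (∫ w, ((a + b * w + d * w ^ 2) + (a + b * (1 - w) + d * (1 - w) ^ 2))
          * mirroredTailDensity F w) / 2 := by
        rw [integral_mul_add_comp_sub_left 1
          (integrable_mul_mirroredTailDensity (by fun_prop))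
          (integrable_mul_mirroredTailDensity (by fun_prop))]
    _ = (∫ w, ((2 * a + b + d) + (-2 * d) * w + (2 * d) * w ^ 2) * mirroredTailDensity F w) / 2 := by
        congr 2
        funext w
        ring
    _ = _ := by
        rw [integral_quadratic_mul_mirroredTailDensity hF]
        ring

end mirroredTailDensity

theorem stmt12_general (F : ℝ) (hF0 : 0 < F) :
    let g : ℝ → ℝ := fun w =>
      Set.indicator (Set.Icc (0 : ℝ) F) (fun w => 3 / (2 * F ^ 3) * (F - w) ^ 2) w +
      Set.indicator (Set.Icc (1 - F) (1 : ℝ)) (fun w => 3 / (2 * F ^ 3) * (w - (1 - F)) ^ 2) w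
    (∫ w, g w) = 1 ∧ (∫ w, w * g w) = 1 / 2 ∧
      (∫ w, w ^ 2 * g w) - (1 / 2) ^ 2 = F ^ 2 / 10 - F / 4 + 1 / 4 := by
  intro g
  have hg : g = fun w => (mirroredTailDensity F w + mirroredTailDensity F (1 - w)) / 2 := by
    funext w
    rw [mirroredTailDensity_one_sub]
    simp only [g, mirroredTailDensity, indicator_apply]
    split_ifs <;> ring
  have hmoment := integral_quadratic_mul_mirrorMixture hF0
  rw [hg]
  refine ⟨by simpa using hmoment 1 0 0, by simpa using hmoment 0 1 0, ?_⟩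
  have hsecond := hmoment 0 0 1
  simp only [zero_add, zero_mul, one_mul] at hsecond
  rw [hsecond]
  ring

/-- Proposition 4: the density `g` of the mirror-corrected infeasible components
on the unit interval — the equal-weight mixture of the mirrored lower-tail and
upper-tail densities — integrates to `1`, has mean `1/2`, and has variance
`F²/10 - F/4 + 1/4`. -/
theorem stmt12 (F : ℝ) (hF0 : 0 < F) (hF1 : F ≤ 1) :
    let g : ℝ → ℝ := fun w =>
      Set.indicator (Set.Icc (0 : ℝ) F) (fun w => 3 / (2 * F ^ 3) * (F - w) ^ 2) w +
      Set.indicator (Set.Icc (1 - F) (1 : ℝ)) (fun w => 3 / (2 * F ^ 3) * (w - (1 - F)) ^ 2) w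
    (∫ w, g w) = 1 ∧ (∫ w, w * g w) = 1 / 2 ∧
      (∫ w, w ^ 2 * g w) - (1 / 2) ^ 2 = F ^ 2 / 10 - F / 4 + 1 / 4 :=
  stmt12_general F hF0
end
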